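/- arXiv:2303.17265 — 9 statements merged into one kernel-verified Lean document; each statement's English description precedes it below -/
import Mathlib

section
/- For every real t and every u > 0, the infinite series ∑_{m=0}^∞ ((-t)^m e^{-u} / m!) · (u^m − 2m·u^{m−1} + m(m−1)·u^{m−2}) converges and its sum equals (1+t)^2 · e^{−u(1+t)}. -/
open MeasureTheory

private lemma exp_hs (x : ℝ) : HasSum (fun n : ℕ => x ^ n / n.factorial) (Real.exp x) := by
  rw [Real.exp_eq_exp_ℝ]
  exact NormedSpace.expSeries_div_hasSum_exp x

/-- The DJM series for the breakage equation with selection `S(v) = v`,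
breakage function `B(u,v) = 2/v` and initial datum `e^{-u}` sums to the exact
solution `(1+t)^2 * e^{-u(1+t)}`. -/
theorem djm_series_breakage_linear_selection (t u : ℝ) (hu : 0 < u) :
    HasSum
      (fun m : ℕ =>
        ((-t) ^ m * Real.exp (-u) / m.factorial) *
          (u ^ m - 2 * m * u ^ (m - 1) + m * (m - 1) * u ^ (m - 2)))
      ((1 + t) ^ 2 * Real.exp (-u * (1 + t))) := by
  set S : ℝ := Real.exp (-u) * Real.exp (-(t * u)) with hS
  set f : ℕ → ℝ := fun m => (-t) ^ m * Real.exp (-u) / m.factorial * u ^ m with hfdef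
  have hf : HasSum f S := by
    have := ((exp_hs (-(t * u))).mul_left (Real.exp (-u)))
    refine this.congr_fun fun m => ?_
    simp only [hfdef]
    rw [show (-(t * u)) = (-t) * u by ring, mul_pow]
    ring
  set g : ℕ → ℝ := fun m => (-t) ^ m * Real.exp (-u) / m.factorial * (2 * m * u ^ (m - 1))
    with hgdef
  set k : ℕ → ℝ := fun m => (-t) ^ m * Real.exp (-u) / m.factorial * (m * (m - 1) * u ^ (m - 2))
    with hkdef
  have hg : HasSum g ((-2 * t) * S) := by
    have h1 : HasSum (fun n : ℕ => g (n + 1)) ((-2 * t) * S) := by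
      refine (hf.mul_left (-2 * t)).congr_fun fun m => ?_
      · simp only [hgdef, hfdef]
        have hfac : ((m + 1).factorial : ℝ) = (m + 1) * m.factorial := by
          push_cast [Nat.factorial_succ]; ring
        have hm : (m.factorial : ℝ) ≠ 0 := Nat.cast_ne_zero.mpr m.factorial_ne_zero
        have hm1 : ((m : ℝ) + 1) ≠ 0 := by positivity
        simp only [Nat.add_sub_cancel, pow_succ, hfac]
        push_cast
        field_simp
    have h0 : (-2 * t) * S - ∑ i ∈ Finset.range 1, g i = (-2 * t) * S := by simp [hgdef]
    exact (hasSum_nat_add_iff' 1).mp (h0.symm ▸ h1)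
  have hk : HasSum k (t ^ 2 * S) := by
    have h1 : HasSum (fun n : ℕ => k (n + 2)) (t ^ 2 * S) := by
      refine (hf.mul_left (t ^ 2)).congr_fun fun m => ?_
      · simp only [hkdef, hfdef]
        have hfac : ((m + 2).factorial : ℝ) = (m + 2) * ((m + 1) * m.factorial) := by
          rw [Nat.factorial_succ, Nat.factorial_succ]; push_cast; ring
        have hm : (m.factorial : ℝ) ≠ 0 := Nat.cast_ne_zero.mpr m.factorial_ne_zero
        have hm1 : ((m : ℝ) + 1) ≠ 0 := by positivity
        have hm2 : ((m : ℝ) + 2) ≠ 0 := by positivity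
        simp only [Nat.add_sub_cancel, show m + 2 - 1 = m + 1 from rfl, hfac]
        push_cast
        field_simp
        ring
    have h0 : t ^ 2 * S - ∑ i ∈ Finset.range 2, k i = t ^ 2 * S := by
      simp [hkdef, Finset.sum_range_succ]
    exact (hasSum_nat_add_iff' 2).mp (h0.symm ▸ h1)
  have total := (hf.sub hg).add hk
  have hval : S - (-2 * t) * S + t ^ 2 * S = (1 + t) ^ 2 * Real.exp (-u * (1 + t)) := by
    have : Real.exp (-u) * Real.exp (-(t * u)) = Real.exp (-u * (1 + t)) := by
      rw [← Real.exp_add]; ring_nf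
    rw [hS, this]; ring
  rw [hval] at total
  refine total.congr_fun fun m => ?_
  simp only [hfdef, hgdef, hkdef]
  ring
end

section
/- The function c(t,u) = (1+t)^2 · e^{−u(1+t)} defined for t ≥ 0 and u > 0 satisfies the integro-differential equation ∂c/∂t(t,u) = 2 ∫_u^∞ c(t,v) dv − u·c(t,u) for all t ≥ 0 and u > 0 (the improper integral converging), together with the initial condition c(0,u) = e^{−u}. -/
open MeasureTheory

lemma exp_int_aux {a : ℝ} (ha : 0 < a) (u : ℝ) :
    ∫ v in Set.Ioi u, a ^ 2 * Real.exp (-v * a) = a * Real.exp (-u * a) := by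
  have hderiv : ∀ x ∈ Set.Ici u, HasDerivAt (fun v => -(a * Real.exp (-v * a)))
      (a ^ 2 * Real.exp (-x * a)) x := by
    intro x _
    have h1 : HasDerivAt (fun v : ℝ => -v * a) (-a) x := by
      simpa using (hasDerivAt_id x).neg.mul_const a
    have h2 := (Real.hasDerivAt_exp (-x * a)).comp x h1
    have := (h2.const_mul a).neg
    refine this.congr_deriv ?_
    ring
  have hint : IntegrableOn (fun v => a ^ 2 * Real.exp (-v * a)) (Set.Ioi u) := by
    have := (exp_neg_integrableOn_Ioi u ha).const_mul (a ^ 2)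
    simpa [mul_comm, neg_mul, IntegrableOn] using this
  have htop : Filter.Tendsto (fun v => -(a * Real.exp (-v * a))) Filter.atTop (nhds 0) := by
    have h0 : Filter.Tendsto (fun v : ℝ => Real.exp (-v * a)) Filter.atTop (nhds 0) := by
      have hma : Filter.Tendsto (fun v : ℝ => v * a) Filter.atTop Filter.atTop :=
        Filter.tendsto_id.atTop_mul_const ha
      have := Real.tendsto_exp_neg_atTop_nhds_zero.comp hma
      simpa [Function.comp_def, neg_mul] using this
    simpa using ((h0.const_mul a).neg)
  have := integral_Ioi_of_hasDerivAt_of_tendsto' hderiv hint htop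
  rw [this]; ring

/-- The function `c(t,u) = (1+t)^2 * e^{-u(1+t)}` solves the breakage equation
`∂c/∂t = 2 ∫_u^∞ c(t,v) dv - u c(t,u)` (selection `S(v)=v`, breakage `B(u,v)=2/v`)
with initial condition `c(0,u) = e^{-u}`. -/
theorem exact_solution_breakage_linear_selection
    (c : ℝ → ℝ → ℝ) (hc : c = fun t u => (1 + t) ^ 2 * Real.exp (-u * (1 + t))) :
    ∀ t ≥ (0 : ℝ), ∀ u > (0 : ℝ),
      IntegrableOn (fun v => c t v) (Set.Ioi u) ∧
      HasDerivAt (fun s => c s u)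
        ((2 * ∫ v in Set.Ioi u, c t v) - u * c t u) t ∧
      c 0 u = Real.exp (-u) := by
  subst hc
  intro t ht u hu
  have ha : (0 : ℝ) < 1 + t := by linarith
  refine ⟨?_, ?_, by norm_num⟩
  · have h := (exp_neg_integrableOn_Ioi u ha).const_mul ((1 + t) ^ 2)
    have he : (fun v : ℝ => (1 + t) ^ 2 * Real.exp (-(1 + t) * v))
        = fun v => (1 + t) ^ 2 * Real.exp (-v * (1 + t)) := by
      funext v; ring_nf
    rwa [he] at h
  · have hI : ∫ v in Set.Ioi u, (1 + v) ^ 0 * ((1 + t) ^ 2 * Real.exp (-v * (1 + t)))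
        = (1 + t) * Real.exp (-u * (1 + t)) := by
      simpa using exp_int_aux ha u
    have hInt : (∫ v in Set.Ioi u, (1 + t) ^ 2 * Real.exp (-v * (1 + t)))
        = (1 + t) * Real.exp (-u * (1 + t)) := by
      simpa using hI
    rw [hInt]
    have h1 : HasDerivAt (fun s : ℝ => (1 + s) ^ 2) (2 * (1 + t)) t := by
      have := ((hasDerivAt_id t).const_add 1).pow 2
      simpa [mul_comm, Pi.pow_def] using this
    have h2 : HasDerivAt (fun s : ℝ => Real.exp (-u * (1 + s))) (-u * Real.exp (-u * (1 + t))) t := by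
      have hl : HasDerivAt (fun s : ℝ => -u * (1 + s)) (-u) t := by
        simpa using ((hasDerivAt_id t).const_add 1).const_mul (-u)
      simpa [mul_comm, Function.comp_def] using (Real.hasDerivAt_exp (-u * (1 + t))).comp t hl
    have := h1.mul h2
    refine this.congr_deriv ?_
    beta_reduce
    ring
end

section
/- Define functions c_m : ℝ × (0,∞) → ℝ recursively by c_0(t,u) = e^{−u} and c_{m+1}(t,u) = ∫_0^t ( 2∫_u^∞ c_m(s,v) dv − u·c_m(s,u) ) ds. Then for every m ≥ 0, every real t, and every u > 0, c_m(t,u) = ((-t)^m e^{−u} / m!) · (u^m − 2m·u^{m−1} + m(m−1)·u^{m−2}). -/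
open MeasureTheory

/-- The Daftardar–Jafari iterates for the breakage equation
`∂c/∂t = 2 ∫_u^∞ c(t,v) dv - u c(t,u)` with initial datum `e^{-u}`:
`c_0(t,u) = e^{-u}` and
`c_{m+1}(t,u) = ∫_0^t (2 ∫_u^∞ c_m(s,v) dv - u c_m(s,u)) ds`. -/
noncomputable def djmIterLinear : ℕ → ℝ → ℝ → ℝ
  | 0 => fun _ u => Real.exp (-u)
  | m + 1 => fun t u =>
      ∫ s in (0:ℝ)..t, ((2 * ∫ v in Set.Ioi u, djmIterLinear m s v) - u * djmIterLinear m s u)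

open MeasureTheory Set Filter Real

open MeasureTheory Set Filter Real

lemma integrableOn_pow_mul_exp_neg (k : ℕ) (u : ℝ) (hu : 0 < u) :
    IntegrableOn (fun v : ℝ => v ^ k * Real.exp (-v)) (Set.Ioi u) := by
  have h := (Real.GammaIntegral_convergent (s := (k : ℝ) + 1) (by positivity)).mono_set
    (Set.Ioi_subset_Ioi hu.le)
  refine h.congr_fun (fun x hx => ?_) measurableSet_Ioi
  have hx0 : (0:ℝ) < x := hu.trans hx
  beta_reduce
  rw [add_sub_cancel_right, Real.rpow_natCast, mul_comm]

lemma inner_integral (m : ℕ) (u : ℝ) (hu : 0 < u) :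
    ∫ v in Set.Ioi u,
        (v ^ m - 2 * m * v ^ (m - 1) + m * ((m:ℝ) - 1) * v ^ (m - 2)) * Real.exp (-v)
      = Real.exp (-u) * (u ^ m - m * u ^ (m - 1)) := by
  have hint : IntegrableOn
      (fun v : ℝ => (v ^ m - 2 * m * v ^ (m - 1) + m * ((m:ℝ) - 1) * v ^ (m - 2)) * Real.exp (-v))
      (Set.Ioi u) := by
    have h1 := integrableOn_pow_mul_exp_neg m u hu
    have h2 := (integrableOn_pow_mul_exp_neg (m-1) u hu).const_mul (2 * (m:ℝ))
    have h3 := (integrableOn_pow_mul_exp_neg (m-2) u hu).const_mul ((m:ℝ) * ((m:ℝ) - 1))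
    refine ((h1.sub h2).add h3).congr ?_
    filter_upwards with x
    simp only [Pi.add_apply, Pi.sub_apply]
    ring
  have hderiv : ∀ x ∈ Set.Ici u,
      HasDerivAt (fun v : ℝ => -((v ^ m - m * v ^ (m - 1)) * Real.exp (-v)))
        ((x ^ m - 2 * m * x ^ (m - 1) + m * ((m:ℝ) - 1) * x ^ (m - 2)) * Real.exp (-x)) x := by
    intro x _
    have hp : HasDerivAt (fun v : ℝ => v ^ m - (m:ℝ) * v ^ (m - 1))
        ((m:ℝ) * x ^ (m - 1) - (m:ℝ) * ((m:ℝ) - 1) * x ^ (m - 2)) x := by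
      rcases m with _ | n
      · simpa using hasDerivAt_const x (1:ℝ)
      · rcases n with _ | n
        · simpa using hasDerivAt_id' x
        · have h : HasDerivAt (fun v : ℝ => v ^ (n+2) - ((n:ℝ)+2) * v ^ (n+1)) _ x := (hasDerivAt_pow (n+2) x).sub ((hasDerivAt_pow (n+1) x).const_mul ((n:ℝ)+2))
          have e1 : n + 1 + 1 - 1 = n + 1 := rfl
          have e2 : n + 1 + 1 - 2 = n := rfl
          have e3 : n + 1 - 1 = n := rfl
          convert h using 2 <;> simp only [e1, e2, e3] <;> push_cast <;> ring
    have he : HasDerivAt (fun v : ℝ => Real.exp (-v)) (-Real.exp (-x)) x := by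
      simpa using (hasDerivAt_neg x).exp
    have : HasDerivAt (fun v : ℝ => -((v ^ m - m * v ^ (m - 1)) * Real.exp (-v))) _ x :=
      (hp.mul he).neg
    convert this using 1
    ring
  have htend : Tendsto (fun v : ℝ => -((v ^ m - m * v ^ (m - 1)) * Real.exp (-v))) atTop (nhds 0) := by
    have h1 := tendsto_pow_mul_exp_neg_atTop_nhds_zero m
    have h2 := (tendsto_pow_mul_exp_neg_atTop_nhds_zero (m-1)).const_mul (m:ℝ)
    have := (h1.sub h2).neg
    simp only [mul_zero, sub_zero, neg_zero] at this
    refine this.congr (fun x => by ring)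
  have := integral_Ioi_of_hasDerivAt_of_tendsto' hderiv hint htend
  rw [this]
  ring

lemma bracket_identity (m : ℕ) (u : ℝ) :
    2 * (u ^ m - m * u ^ (m - 1)) -
        u * (u ^ m - 2 * m * u ^ (m - 1) + m * ((m:ℝ) - 1) * u ^ (m - 2))
      = -(u ^ (m + 1) - 2 * ((m:ℝ) + 1) * u ^ m + ((m:ℝ) + 1) * m * u ^ (m - 1)) := by
  rcases m with _ | _ | n
  · push_cast; ring
  · push_cast; ring
  · have e1 : n + 1 + 1 - 1 = n + 1 := rfl
    have e2 : n + 1 + 1 - 2 = n := rfl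
    simp only [e1, e2]
    push_cast
    ring

/-- Closed form of the DJM terms for the breakage equation with selection
`S(v) = v` and breakage function `B(u,v) = 2/v`:
`c_m(t,u) = ((-t)^m e^{-u}/m!) (u^m - 2m u^{m-1} + m(m-1) u^{m-2})`. -/
theorem djmIterLinear_closed_form (m : ℕ) (t : ℝ) (u : ℝ) (hu : 0 < u) :
    djmIterLinear m t u =
      ((-t) ^ m * Real.exp (-u) / m.factorial) *
        (u ^ m - 2 * m * u ^ (m - 1) + m * (m - 1) * u ^ (m - 2)) := by
  induction m generalizing t u with
  | zero => simp [djmIterLinear]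
  | succ m ih =>
    have h1 : ∀ s : ℝ, (∫ v in Set.Ioi u, djmIterLinear m s v)
        = ((-s) ^ m / m.factorial) * (Real.exp (-u) * (u ^ m - m * u ^ (m - 1))) := by
      intro s
      have hcongr : ∀ v ∈ Set.Ioi u, djmIterLinear m s v
          = ((-s) ^ m / m.factorial) *
            ((v ^ m - 2 * m * v ^ (m - 1) + m * ((m:ℝ) - 1) * v ^ (m - 2)) * Real.exp (-v)) := by
        intro v hv
        rw [ih s v (hu.trans hv)]
        ring
      rw [MeasureTheory.setIntegral_congr_fun measurableSet_Ioi hcongr,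
        MeasureTheory.integral_const_mul, inner_integral m u hu]
    have h2 : ∀ s : ℝ,
        ((2 * ∫ v in Set.Ioi u, djmIterLinear m s v) - u * djmIterLinear m s u)
          = (Real.exp (-u) / m.factorial *
              -(u ^ (m + 1) - 2 * ((m:ℝ) + 1) * u ^ m + ((m:ℝ) + 1) * m * u ^ (m - 1)))
            * ((-1:ℝ) ^ m * s ^ m) := by
      intro s
      rw [h1 s, ih s u hu, ← bracket_identity m u]
      rw [show (-s:ℝ) ^ m = (-1:ℝ) ^ m * s ^ m by rw [neg_pow]]
      ring
    show (∫ s in (0:ℝ)..t,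
        ((2 * ∫ v in Set.Ioi u, djmIterLinear m s v) - u * djmIterLinear m s u)) = _
    rw [intervalIntegral.integral_congr (g := fun s =>
        (Real.exp (-u) / m.factorial *
          -(u ^ (m + 1) - 2 * ((m:ℝ) + 1) * u ^ m + ((m:ℝ) + 1) * m * u ^ (m - 1)))
        * ((-1:ℝ) ^ m * s ^ m)) (fun s _ => h2 s)]
    rw [intervalIntegral.integral_const_mul, intervalIntegral.integral_const_mul,
      integral_pow]
    have e1 : m + 1 - 1 = m := rfl
    have e2 : m + 1 - 2 = m - 1 := rfl
    simp only [e1, e2]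
    have hm : ((m:ℝ) + 1) ≠ 0 := by positivity
    have hfac : ((m.factorial : ℝ)) ≠ 0 := Nat.cast_ne_zero.mpr m.factorial_ne_zero
    rw [Nat.factorial_succ]
    push_cast
    rw [show (-t:ℝ) ^ (m+1) = (-1:ℝ) ^ (m+1) * t ^ (m+1) by rw [neg_pow]]
    field_simp
    ring
end

section
/- The function c(t,u) = (1 + 2t + 2tu) · e^{−u(1+tu)} defined for t ≥ 0 and u > 0 satisfies the integro-differential equation ∂c/∂t(t,u) = 2 ∫_u^∞ v·c(t,v) dv − u^2·c(t,u) for all t ≥ 0 and u > 0 (the improper integral converging), together with the initial condition c(0,u) = e^{−u}. -/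
open MeasureTheory

/-- The function `c(t,u) = (1 + 2t + 2tu) * e^{-u(1+tu)}` solves the breakage equation
`∂c/∂t = 2 ∫_u^∞ v c(t,v) dv - u^2 c(t,u)` (selection `S(v)=v^2`, breakage `B(u,v)=2/v`)
with initial condition `c(0,u) = e^{-u}`. -/
theorem exact_solution_breakage_quadratic_selection
    (c : ℝ → ℝ → ℝ)
    (hc : c = fun t u => (1 + 2 * t + 2 * t * u) * Real.exp (-u * (1 + t * u))) :
    ∀ t ≥ (0 : ℝ), ∀ u > (0 : ℝ),
      IntegrableOn (fun v => v * c t v) (Set.Ioi u) ∧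
      HasDerivAt (fun s => c s u)
        ((2 * ∫ v in Set.Ioi u, v * c t v) - u ^ 2 * c t u) t ∧
      c 0 u = Real.exp (-u) := by
  subst hc
  intro t ht u hu
  set g : ℝ → ℝ := fun v => v * ((1 + 2 * t + 2 * t * v) * Real.exp (-v * (1 + t * v)))
    with hg
  set F : ℝ → ℝ := fun v => -((1 + v) * Real.exp (-v * (1 + t * v))) with hF
  have hcont : ContinuousOn F (Set.Ici u) := by
    apply Continuous.continuousOn
    fun_prop
  have hderiv : ∀ v ∈ Set.Ioi u, HasDerivAt F (g v) v := by
    intro v _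
    have h1 : HasDerivAt (fun x : ℝ => -x * (1 + t * x))
        (-1 * (1 + t * v) + -v * (0 + t * 1)) v := by
      exact ((hasDerivAt_id v).neg.mul ((hasDerivAt_const v 1).add
        ((hasDerivAt_id v).const_mul t)))
    have h2 := h1.exp
    have h3 : HasDerivAt (fun x : ℝ => 1 + x) 1 v := by
      exact (hasDerivAt_id v).const_add 1
    have h4 : HasDerivAt F _ v := (h3.mul h2).neg
    convert h4 using 1
    show g v = _
    simp only [hg]
    ring
  have hpos : ∀ v ∈ Set.Ioi u, 0 ≤ g v := by
    intro v hv
    have hv0 : (0 : ℝ) < v := hu.trans hv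
    have : (0:ℝ) < 1 + 2 * t + 2 * t * v := by nlinarith
    have := Real.exp_pos (-v * (1 + t * v))
    positivity
  have htend : Filter.Tendsto F Filter.atTop (nhds 0) := by
    have hb : Filter.Tendsto (fun v : ℝ => Real.exp (-v) + v * Real.exp (-v))
        Filter.atTop (nhds 0) := by
      have h1 : Filter.Tendsto (fun v : ℝ => Real.exp (-v)) Filter.atTop (nhds 0) :=
        Real.tendsto_exp_neg_atTop_nhds_zero
      have h2 : Filter.Tendsto (fun v : ℝ => v * Real.exp (-v)) Filter.atTop (nhds 0) := by
        simpa using Real.tendsto_pow_mul_exp_neg_atTop_nhds_zero 1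
      simpa using h1.add h2
    rw [show (0:ℝ) = -0 by ring]
    apply Filter.Tendsto.neg
    apply squeeze_zero' (g := fun v => Real.exp (-v) + v * Real.exp (-v)) _ _ hb
    · filter_upwards [Filter.eventually_ge_atTop (0:ℝ)] with v hv
      have := Real.exp_pos (-v * (1 + t * v))
      positivity
    · filter_upwards [Filter.eventually_ge_atTop (0:ℝ)] with v hv
      have hle : Real.exp (-v * (1 + t * v)) ≤ Real.exp (-v) := by
        apply Real.exp_le_exp.mpr
        nlinarith [mul_nonneg ht (mul_nonneg hv hv)]
      have h0 := Real.exp_pos (-v * (1 + t * v))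
      nlinarith [Real.exp_pos (-v)]
  have hint : IntegrableOn g (Set.Ioi u) :=
    integrableOn_Ioi_deriv_of_nonneg (hcont.continuousWithinAt Set.self_mem_Ici) hderiv hpos htend
  have hval : ∫ v in Set.Ioi u, g v = 0 - F u :=
    integral_Ioi_of_hasDerivAt_of_nonneg (hcont.continuousWithinAt Set.self_mem_Ici) hderiv hpos htend
  refine ⟨hint, ?_, by simp⟩
  have hd : HasDerivAt (fun s : ℝ => (1 + 2 * s + 2 * s * u) * Real.exp (-u * (1 + s * u)))
      ((0 + 2 * 1 + 2 * 1 * u) * Real.exp (-u * (1 + t * u)) +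
        (1 + 2 * t + 2 * t * u) * (Real.exp (-u * (1 + t * u)) * (-u * (0 + 1 * u)))) t := by
    have hlin : HasDerivAt (fun s : ℝ => 1 + 2 * s + 2 * s * u) (0 + 2 * 1 + 2 * 1 * u) t :=
      (((hasDerivAt_const t 1).add ((hasDerivAt_id t).const_mul 2)).add
        (((hasDerivAt_id t).const_mul 2).mul_const u))
    have hin : HasDerivAt (fun s : ℝ => -u * (1 + s * u)) (-u * (0 + 1 * u)) t :=
      (((hasDerivAt_const t 1).add ((hasDerivAt_id t).mul_const u)).const_mul (-u))
    exact hlin.mul hin.exp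
  convert hd using 1
  rw [hval]
  simp only [hF]
  ring
end

section
/- For every t ≥ 0, the improper integral ∫_0^∞ u·(1 + 2t + 2tu)·e^{−u(1+tu)} du converges and equals 1. -/
open MeasureTheory

lemma aux_hasDeriv (t : ℝ) (u : ℝ) :
    HasDerivAt (fun u : ℝ => -((u + 1) * Real.exp (-u * (1 + t * u))))
      (u * ((1 + 2 * t + 2 * t * u) * Real.exp (-u * (1 + t * u)))) u := by
  have h1 : HasDerivAt (fun u : ℝ => -u * (1 + t * u)) (-(1 + 2 * t * u)) u := by
    have : HasDerivAt (fun u : ℝ => -u * (1 + t * u)) (-1 * (1 + t * u) + -u * (t * 1)) u := by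
      exact ((hasDerivAt_id u).neg.mul (((hasDerivAt_id u).const_mul t).const_add 1))
    convert this using 1; ring
  have h2 := (Real.hasDerivAt_exp _).comp u h1
  have h3 : HasDerivAt (fun u : ℝ => (u + 1) * Real.exp (-u * (1 + t * u)))
      (1 * Real.exp (-u * (1 + t * u)) + (u + 1) * (Real.exp (-u * (1 + t * u)) * -(1 + 2 * t * u))) u :=
    ((hasDerivAt_id u).add_const 1).mul h2
  exact h3.neg.congr_deriv (by ring)

lemma aux_tendsto (t : ℝ) (ht : 0 ≤ t) :
    Filter.Tendsto (fun u : ℝ => -((u + 1) * Real.exp (-u * (1 + t * u))))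
      Filter.atTop (nhds 0) := by
  have hb : Filter.Tendsto (fun u : ℝ => (u + 1) * Real.exp (-u)) Filter.atTop (nhds 0) := by
    have h1 : Filter.Tendsto (fun u : ℝ => u * Real.exp (-u)) Filter.atTop (nhds 0) := by
      simpa using Real.tendsto_pow_mul_exp_neg_atTop_nhds_zero 1
    have h2 : Filter.Tendsto (fun u : ℝ => Real.exp (-u)) Filter.atTop (nhds 0) := by
      simpa using Real.tendsto_exp_comp_nhds_zero.2 Filter.tendsto_neg_atTop_atBot
    simpa [add_mul] using h1.add h2
  have key : Filter.Tendsto (fun u : ℝ => (u + 1) * Real.exp (-u * (1 + t * u)))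
      Filter.atTop (nhds 0) := by
    apply squeeze_zero' (g := fun u : ℝ => (u + 1) * Real.exp (-u))
    · filter_upwards [Filter.eventually_ge_atTop (0:ℝ)] with u hu
      positivity
    · filter_upwards [Filter.eventually_ge_atTop (0:ℝ)] with u hu
      apply mul_le_mul_of_nonneg_left _ (by linarith)
      apply Real.exp_le_exp.2
      nlinarith [mul_nonneg ht (mul_self_nonneg u)]
    · exact hb
  simpa using key.neg

/-- Volume conservation for the exact solution `c(t,u) = (1+2t+2tu) e^{-u(1+tu)}`
of the breakage equation with `S(v)=v^2`, `B(u,v)=2/v`: the first moment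
`μ₁(t) = ∫_0^∞ u c(t,u) du` converges and equals `1` for all `t ≥ 0`. -/
theorem first_moment_conserved_breakage_quadratic_selection (t : ℝ) (ht : 0 ≤ t) :
    IntegrableOn
      (fun u => u * ((1 + 2 * t + 2 * t * u) * Real.exp (-u * (1 + t * u))))
      (Set.Ioi 0) ∧
    (∫ u in Set.Ioi (0 : ℝ),
        u * ((1 + 2 * t + 2 * t * u) * Real.exp (-u * (1 + t * u)))) = 1 := by
  have hderiv : ∀ x ∈ Set.Ici (0:ℝ), HasDerivAt (fun u : ℝ => -((u + 1) * Real.exp (-u * (1 + t * u))))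
      (x * ((1 + 2 * t + 2 * t * x) * Real.exp (-x * (1 + t * x)))) x :=
    fun x _ => aux_hasDeriv t x
  have hpos : ∀ x ∈ Set.Ioi (0:ℝ), 0 ≤ x * ((1 + 2 * t + 2 * t * x) * Real.exp (-x * (1 + t * x))) := by
    intro x hx
    have hx0 : 0 < x := hx
    positivity
  have hlim := aux_tendsto t ht
  refine ⟨integrableOn_Ioi_deriv_of_nonneg' hderiv hpos hlim, ?_⟩
  have := integral_Ioi_of_hasDerivAt_of_nonneg' hderiv hpos hlim
  simpa using this
end

section
/- Fix r > 0 and define g(t,u) = e^{−ut}·(2t + t^2·(r − u)) for t ≥ 0 and 0 < u < r. Then for all t ≥ 0 and 0 < u < r, g satisfies ∂g/∂t(t,u) = 2·e^{−rt} + 2∫_u^r g(t,v) dv − u·g(t,u), together with g(0,u) = 0. -/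
open MeasureTheory

private lemma exp_deriv (t c : ℝ) :
    HasDerivAt (fun s : ℝ => Real.exp (-(c * s))) (-c * Real.exp (-(c * t))) t := by
  have h : HasDerivAt (fun s : ℝ => -(c * s)) (-c) t := by
    simpa using ((hasDerivAt_id t).const_mul c).fun_neg
  simpa [mul_comm] using h.exp

private lemma key_int (t u r : ℝ) :
    (∫ v in u..r, Real.exp (-(v * t)) * (2 * t + t ^ 2 * (r - v)))
    = -Real.exp (-(r * t)) + Real.exp (-(u * t)) * (1 + t * (r - u)) := by
  have h : ∀ v ∈ Set.uIcc u r,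
      HasDerivAt (fun v : ℝ => -(Real.exp (-(v * t)) * (1 + t * (r - v))))
        (Real.exp (-(v * t)) * (2 * t + t ^ 2 * (r - v))) v := by
    intro v _
    have h1 : HasDerivAt (fun v : ℝ => Real.exp (-(v * t))) (-t * Real.exp (-(v * t))) v := by
      have h : HasDerivAt (fun v : ℝ => -(v * t)) (-t) v := by
        simpa using ((hasDerivAt_id v).mul_const t).fun_neg
      simpa [mul_comm] using h.exp
    have h2 : HasDerivAt (fun v : ℝ => 1 + t * (r - v)) (-t) v := by
      have : HasDerivAt (fun v : ℝ => 1 + t * (r - v)) (t * (0 - 1)) v := by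
        exact (((hasDerivAt_const v r).sub (hasDerivAt_id v)).const_mul t).const_add 1
      simpa using this
    have := (h1.fun_mul h2).fun_neg
    refine this.congr_deriv ?_
    ring
  have hcont : IntervalIntegrable
      (fun v : ℝ => Real.exp (-(v * t)) * (2 * t + t ^ 2 * (r - v)))
      MeasureTheory.volume u r := by
    apply Continuous.intervalIntegrable
    continuity
  have := intervalIntegral.integral_eq_sub_of_hasDerivAt h hcont
  rw [this]
  ring_nf

/-- For the breakage equation with `S(v)=v`, `B(u,v)=2/v` and monodisperse initial
datum `δ(u-r)`, the regular part `g(t,u) = e^{-ut}(2t + t^2 (r-u))` of the exact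
solution satisfies `∂g/∂t = 2 e^{-rt} + 2 ∫_u^r g(t,v) dv - u g(t,u)` on
`0 < u < r`, `t ≥ 0`, with `g(0,u) = 0`. -/
theorem regular_part_monodisperse_linear_selection
    (r : ℝ) (hr : 0 < r)
    (g : ℝ → ℝ → ℝ) (hg : g = fun t u => Real.exp (-(u * t)) * (2 * t + t ^ 2 * (r - u))) :
    ∀ t ≥ (0 : ℝ), ∀ u, 0 < u → u < r →
      HasDerivAt (fun s => g s u)
        (2 * Real.exp (-(r * t)) + (2 * ∫ v in u..r, g t v) - u * g t u) t ∧
      g 0 u = 0 := by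
  subst hg
  intro t ht u hu hur
  refine ⟨?_, by simp⟩
  have h1 := exp_deriv t u
  have h2 : HasDerivAt (fun s : ℝ => 2 * s + s ^ 2 * (r - u)) (2 + 2 * t * (r - u)) t := by
    have := (((hasDerivAt_id t).const_mul 2)).fun_add
      (((hasDerivAt_pow 2 t)).mul_const (r - u))
    simpa [mul_comm, mul_assoc] using this
  have hD := h1.fun_mul h2
  refine hD.congr_deriv ?_
  rw [key_int]
  ring
end

section
/- Fix r > 0 and define g(t,u) = 2rt·e^{−u^2 t} for t ≥ 0 and 0 < u < r. Then for all t ≥ 0 and 0 < u < r, g satisfies ∂g/∂t(t,u) = 2r·e^{−r^2 t} + 2∫_u^r v·g(t,v) dv − u^2·g(t,u), together with g(0,u) = 0. -/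
open MeasureTheory

lemma antideriv_aux (r t v : ℝ) :
    HasDerivAt (fun v : ℝ => -(r * Real.exp (-(v ^ 2 * t))))
      (v * (2 * r * t * Real.exp (-(v ^ 2 * t)))) v := by
  have h1 : HasDerivAt (fun v : ℝ => -(v ^ 2 * t)) (-(2 * v * t)) v := by
    have := ((hasDerivAt_pow 2 v).mul_const t).fun_neg
    simpa [mul_comm, mul_assoc, mul_left_comm] using this
  have h2 : HasDerivAt (fun v : ℝ => Real.exp (-(v ^ 2 * t)))
      (Real.exp (-(v ^ 2 * t)) * (-(2 * v * t))) v := (Real.hasDerivAt_exp _).comp v h1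
  have h3 : HasDerivAt (fun v : ℝ => -(r * Real.exp (-(v ^ 2 * t))))
      (-(r * (Real.exp (-(v ^ 2 * t)) * -(2 * v * t)))) v := (h2.const_mul r).fun_neg
  convert h3 using 1
  ring

/-- For the breakage equation with `S(v)=v^2`, `B(u,v)=2/v` and monodisperse initial
datum `δ(u-r)`, the regular part `g(t,u) = 2rt e^{-u^2 t}` of the exact solution
satisfies `∂g/∂t = 2r e^{-r^2 t} + 2 ∫_u^r v g(t,v) dv - u^2 g(t,u)` on
`0 < u < r`, `t ≥ 0`, with `g(0,u) = 0`. -/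
theorem regular_part_monodisperse_quadratic_selection
    (r : ℝ) (hr : 0 < r)
    (g : ℝ → ℝ → ℝ) (hg : g = fun t u => 2 * r * t * Real.exp (-(u ^ 2 * t))) :
    ∀ t ≥ (0 : ℝ), ∀ u, 0 < u → u < r →
      HasDerivAt (fun s => g s u)
        (2 * r * Real.exp (-(r ^ 2 * t)) + (2 * ∫ v in u..r, v * g t v) - u ^ 2 * g t u) t ∧
      g 0 u = 0 := by
  subst hg
  intro t ht u hu hur
  refine ⟨?_, by simp⟩
  have hint : (∫ v in u..r, v * (2 * r * t * Real.exp (-(v ^ 2 * t))))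
      = -(r * Real.exp (-(r ^ 2 * t))) - -(r * Real.exp (-(u ^ 2 * t))) := by
    refine intervalIntegral.integral_eq_sub_of_hasDerivAt
      (fun v _ => antideriv_aux r t v) ?_
    apply Continuous.intervalIntegrable
    fun_prop
  simp only
  rw [hint]
  have h1 : HasDerivAt (fun s : ℝ => 2 * r * s * Real.exp (-(u ^ 2 * s)))
      (2 * r * Real.exp (-(u ^ 2 * t)) + 2 * r * t * (Real.exp (-(u ^ 2 * t)) * (-(u ^ 2)))) t := by
    have ha : HasDerivAt (fun s : ℝ => 2 * r * s) (2 * r) t := by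
      simpa using (hasDerivAt_id t).const_mul (2 * r)
    have hb : HasDerivAt (fun s : ℝ => Real.exp (-(u ^ 2 * s)))
        (Real.exp (-(u ^ 2 * t)) * (-(u ^ 2))) t := by
      have h0 : HasDerivAt (fun s : ℝ => -(u ^ 2 * s)) (-(u ^ 2)) t := by
        simpa using ((hasDerivAt_id t).const_mul (u ^ 2)).fun_neg
      exact (Real.hasDerivAt_exp _).comp t h0
    exact ha.mul hb
  convert h1 using 1
  ring
end

section
/- Let X be a real Banach space, f ∈ X, L : X → X a continuous linear map, and N : X → X a continuous map. Define c_0 = f and, for m ≥ 0, c_{m+1} = L(c_m) + G_m, where G_0 = N(c_0) and G_i = N(∑_{j=0}^{i} c_j) − N(∑_{j=0}^{i−1} c_j) for i ≥ 1. If the series ∑_{i=0}^∞ c_i converges in X to some c, then c solves the functional equation c = f + L(c) + N(c). -/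
/-!
Since `G` telescopes, `∑_{m ≤ n} G m = N (∑_{j ≤ n} c j)`, so the partial sums
`S (n + 1) = ∑_{i ≤ n} c i` satisfy `S (n + 2) = f + L (S (n + 1)) + N (S (n + 1))` with
`S 1 = f`: they are the Picard iterates of `u ↦ f + L u + N u` started at `f`. A limit of
the iterates of a continuous map is a fixed point of it.
-/

open Filter Finset Function

section Telescoping

variable {X : Type*} [AddCommGroup X]

theorem sum_range_succ_eq_of_telescoping {G g : ℕ → X} (hG0 : G 0 = g 1)
    (hG : ∀ i ≥ 1, G i = g (i + 1) - g i) (n : ℕ) :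
    ∑ m ∈ range (n + 1), G m = g (n + 1) := by
  rw [sum_range_succ', sum_congr rfl fun i _ => hG (i + 1) (by omega),
    sum_range_sub (fun i => g (i + 1)), hG0]
  abel

variable {F : Type*} [FunLike F X X] [AddMonoidHomClass F X X]

theorem djm_partial_sum_succ_eq_iterate (f : X) (L : F) (N : X → X) {c G : ℕ → X}
    (hc0 : c 0 = f) (hG0 : G 0 = N (c 0))
    (hG : ∀ i ≥ 1, G i = N (∑ j ∈ range (i + 1), c j) - N (∑ j ∈ range i, c j))
    (hrec : ∀ m, c (m + 1) = L (c m) + G m) (n : ℕ) :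
    ∑ i ∈ range (n + 1), c i = (fun u => f + L u + N u)^[n] f := by
  induction n with
  | zero => simp [hc0]
  | succ n ih =>
    have hGsum : ∑ m ∈ range (n + 1), G m = N (∑ j ∈ range (n + 1), c j) :=
      sum_range_succ_eq_of_telescoping (g := fun i => N (∑ j ∈ range i, c j))
        (by rw [hG0, sum_range_one]) hG n
    rw [iterate_succ_apply', ← ih, sum_range_succ', hc0, sum_congr rfl fun m _ => hrec m,
      sum_add_distrib, ← map_sum, hGsum]
    abel

end Telescoping

theorem djm_limit_solves_equation_general
    (X : Type*) [NormedAddCommGroup X] [NormedSpace ℝ X]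
    (f : X) (L : X →L[ℝ] X) (N : X → X) (hN : Continuous N)
    (c G : ℕ → X)
    (hc0 : c 0 = f)
    (hG0 : G 0 = N (c 0))
    (hG : ∀ i ≥ 1, G i = N (∑ j ∈ Finset.range (i + 1), c j)
        - N (∑ j ∈ Finset.range i, c j))
    (hrec : ∀ m, c (m + 1) = L (c m) + G m)
    (cl : X)
    (hconv : Tendsto (fun n => ∑ i ∈ Finset.range n, c i) atTop (nhds cl)) :
    cl = f + L cl + N cl := by
  have hiter : Tendsto (fun n => (fun u => f + L u + N u)^[n] f) atTop (nhds cl) := by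
    simpa only [comp_def, djm_partial_sum_succ_eq_iterate f L N hc0 hG0 hG hrec] using
      hconv.comp (tendsto_add_atTop_nat 1)
  have hF : Continuous fun u => f + L u + N u := by fun_prop
  exact (isFixedPt_of_tendsto_iterate hiter hF.continuousAt).symm

/-- Consistency of the DJM: if `c₀ = f`, `c_{m+1} = L(c_m) + G_m` with
`G₀ = N(c₀)` and `G_i = N(∑_{j≤i} c_j) - N(∑_{j<i} c_j)` for `i ≥ 1`, and the
series `∑ c_i` converges to `c`, then `c = f + L(c) + N(c)`. -/
theorem djm_limit_solves_equation
    (X : Type*) [NormedAddCommGroup X] [NormedSpace ℝ X] [CompleteSpace X]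
    (f : X) (L : X →L[ℝ] X) (N : X → X) (hN : Continuous N)
    (c G : ℕ → X)
    (hc0 : c 0 = f)
    (hG0 : G 0 = N (c 0))
    (hG : ∀ i ≥ 1, G i = N (∑ j ∈ Finset.range (i + 1), c j)
        - N (∑ j ∈ Finset.range i, c j))
    (hrec : ∀ m, c (m + 1) = L (c m) + G m)
    (cl : X)
    (hconv : Tendsto (fun n => ∑ i ∈ Finset.range n, c i) atTop (nhds cl)) :
    cl = f + L cl + N cl :=
  djm_limit_solves_equation_general X f L N hN c G hc0 hG0 hG hrec cl hconv
end

section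
/- For u > 0 and t ≥ 0, the partial sums Φ_n(t,u) = ∑_{m=0}^{n} ((-t)^m e^{−u}/m!)(u^m − 2m u^{m−1} + m(m−1) u^{m−2}) of the DJM series for the breakage equation with S(v) = v, B(u,v) = 2/v and initial data e^{−u} satisfy: for every fixed t ≥ 0 and every compact set of volumes [a,b] ⊂ (0,∞), Φ_n converges uniformly on [a,b] to (1+t)^2 e^{−u(1+t)} as n → ∞. -/
/-!
With `x = -t u`, the `m`-th DJM term is
`e^{-u} (x^m/m! + 2t · m x^{m-1}/m! + t² · m(m-1) x^{m-2}/m!)`: the `m`-th terms of the exponential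
series and of its first two termwise derivatives, each of which sums to `e^x`. Hence the series sums
to `(1 + t)² e^{-u} e^{-tu}`. For `u ∈ [a, b]` all three series are dominated by the same series at
`R = |t| max(|a|, |b|)`, so the Weierstrass M-test makes the convergence uniform.
-/

open Filter Finset Real Nat

/-- The `m`-th term of the `k`-th termwise derivative of the exponential series at `x`. -/
noncomputable def expDerivTerm (k : ℕ) (x : ℝ) (m : ℕ) : ℝ :=
  m.descFactorial k * x ^ (m - k) / m !

theorem hasSum_expDerivTerm (k : ℕ) (x : ℝ) : HasSum (expDerivTerm k x) (exp x) := by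
  rw [← hasSum_nat_add_iff' k]
  have hhead : ∑ i ∈ range k, expDerivTerm k x i = 0 :=
    sum_eq_zero fun i hi => by
      simp [expDerivTerm, descFactorial_eq_zero_iff_lt.mpr (mem_range.mp hi)]
  rw [hhead, sub_zero, exp_eq_exp_ℝ]
  refine (NormedSpace.expSeries_div_hasSum_exp x).congr_fun fun m => ?_
  have hfac : ((m + k) ! : ℝ) = m ! * (m + k).descFactorial k := by
    exact_mod_cast (factorial_mul_descFactorial (Nat.le_add_left k m)).symm.trans (by simp)
  simp only [expDerivTerm, Nat.add_sub_cancel, hfac]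
  field_simp

theorem abs_expDerivTerm_le {x R : ℝ} (hxR : |x| ≤ R) (k m : ℕ) :
    |expDerivTerm k x m| ≤ expDerivTerm k R m := by
  unfold expDerivTerm
  rw [abs_div, abs_mul, abs_pow, Nat.abs_cast, Nat.abs_cast]
  gcongr

noncomputable def djmTerm (t u : ℝ) (m : ℕ) : ℝ :=
  ((-t) ^ m * exp (-u) / m !) * (u ^ m - 2 * m * u ^ (m - 1) + m * (m - 1) * u ^ (m - 2))

theorem djmTerm_eq (t u : ℝ) (m : ℕ) :
    djmTerm t u m = exp (-u) * (expDerivTerm 0 (-(t * u)) m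
      + 2 * t * expDerivTerm 1 (-(t * u)) m + t ^ 2 * expDerivTerm 2 (-(t * u)) m) := by
  rcases m with _ | _ | m
  · simp [djmTerm, expDerivTerm]
  · simp [djmTerm, expDerivTerm]
    ring
  · simp [djmTerm, expDerivTerm]
    ring

theorem hasSum_djmTerm (t u : ℝ) :
    HasSum (djmTerm t u) ((1 + t) ^ 2 * exp (-u * (1 + t))) := by
  have h := (((hasSum_expDerivTerm 0 (-(t * u))).add
    ((hasSum_expDerivTerm 1 (-(t * u))).mul_left (2 * t))).add
    ((hasSum_expDerivTerm 2 (-(t * u))).mul_left (t ^ 2))).mul_left (exp (-u))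
  have hvalue : (1 + t) ^ 2 * exp (-u * (1 + t))
      = exp (-u) * (exp (-(t * u)) + 2 * t * exp (-(t * u)) + t ^ 2 * exp (-(t * u))) := by
    rw [show -u * (1 + t) = -u + -(t * u) by ring, exp_add]
    ring
  rw [hvalue]
  exact h.congr_fun (djmTerm_eq t u)

theorem abs_djmTerm_le {t a b u : ℝ} (hu : u ∈ Set.Icc a b) (m : ℕ) :
    |djmTerm t u m| ≤ exp (-a) * (expDerivTerm 0 (|t| * max |a| |b|) m
      + 2 * |t| * expDerivTerm 1 (|t| * max |a| |b|) m
      + t ^ 2 * expDerivTerm 2 (|t| * max |a| |b|) m) := by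
  have hx : |-(t * u)| ≤ |t| * max |a| |b| := by
    rw [abs_neg, abs_mul]
    gcongr
    exact abs_le_max_abs_abs hu.1 hu.2
  rw [djmTerm_eq, abs_mul, abs_exp]
  gcongr
  · exact hu.1
  · refine (abs_add_three _ _ _).trans ?_
    simp only [abs_mul, abs_two, abs_pow, sq_abs]
    gcongr <;> exact abs_expDerivTerm_le hx _ _

theorem djm_partial_sums_tendstoUniformlyOn_linear_selection_general
    (t : ℝ) (a b : ℝ) :
    TendstoUniformlyOn
      (fun n u => ∑ m ∈ Finset.range (n + 1),
        ((-t) ^ m * Real.exp (-u) / m.factorial) *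
          (u ^ m - 2 * m * u ^ (m - 1) + m * (m - 1) * u ^ (m - 2)))
      (fun u => (1 + t) ^ 2 * Real.exp (-u * (1 + t)))
      atTop (Set.Icc a b) := by
  set R := |t| * max |a| |b|
  have hmajorant : Summable fun m => exp (-a) * (expDerivTerm 0 R m
      + 2 * |t| * expDerivTerm 1 R m + t ^ 2 * expDerivTerm 2 R m) :=
    ((((hasSum_expDerivTerm 0 R).add ((hasSum_expDerivTerm 1 R).mul_left (2 * |t|))).add
      ((hasSum_expDerivTerm 2 R).mul_left (t ^ 2))).mul_left (exp (-a))).summable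
  have hpartial := tendstoUniformlyOn_tsum_nat (f := fun m u => djmTerm t u m) hmajorant
    fun m u hu => abs_djmTerm_le hu m
  have hlimit : (fun u => ∑' m, djmTerm t u m) = fun u => (1 + t) ^ 2 * exp (-u * (1 + t)) :=
    funext fun u => (hasSum_djmTerm t u).tsum_eq
  rw [hlimit] at hpartial
  exact fun v hv => (tendsto_add_atTop_nat 1).eventually (hpartial v hv)

/-- Uniform convergence on compact volume sets of the DJM partial sums
`Φ_n(t,u) = ∑_{m=0}^n ((-t)^m e^{-u}/m!)(u^m - 2m u^{m-1} + m(m-1) u^{m-2})`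
to the exact solution `(1+t)^2 e^{-u(1+t)}` of the breakage equation with
`S(v)=v`, `B(u,v)=2/v` and initial datum `e^{-u}`. -/
theorem djm_partial_sums_tendstoUniformlyOn_linear_selection
    (t : ℝ) (ht : 0 ≤ t) (a b : ℝ) (ha : 0 < a) (hab : a ≤ b) :
    TendstoUniformlyOn
      (fun n u => ∑ m ∈ Finset.range (n + 1),
        ((-t) ^ m * Real.exp (-u) / m.factorial) *
          (u ^ m - 2 * m * u ^ (m - 1) + m * (m - 1) * u ^ (m - 2)))
      (fun u => (1 + t) ^ 2 * Real.exp (-u * (1 + t)))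
      atTop (Set.Icc a b) :=
  djm_partial_sums_tendstoUniformlyOn_linear_selection_general t a b
end
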